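/- Let β > 0. For every a > 0, the integral ∫_{ℝ³} exp(a·‖v‖²/λ(v)) · M_β(v) dv is finite; that is, ‖v‖²/λ(v) has all exponential moments with respect to the measure M_β(v) dv. (Here λ(v) > 0 for every v, so the integrand is well defined.) -/

import Mathlib

/-!
Averaging the definition of `λ` over `w` and `-w` gives
`λ(v) = (π/2) ∫ M_β(w) (‖v - w‖ + ‖v + w‖) dw ≥ π ‖v‖ ∫ M_β = π ‖v‖`.
So `‖v‖² / λ(v) ≤ ‖v‖ / π` grows only linearly, and `exp (c ‖v‖)` is integrable against any
Gaussian.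
-/

open MeasureTheory

noncomputable section

abbrev E3 := EuclideanSpace ℝ (Fin 3)

/-- The Maxwellian density with inverse temperature `β` on `ℝ³`. -/
def Mβ (β : ℝ) (v : E3) : ℝ :=
  (β / (2 * Real.pi)) ^ ((3 : ℝ) / 2) * Real.exp (-(β / 2) * ‖v‖ ^ 2)

/-- The collision frequency `λ(v) = π ∫ M_β(w) ‖v − w‖ dw`. -/
def lam (β : ℝ) (v : E3) : ℝ := Real.pi * ∫ w : E3, Mβ β w * ‖v - w‖

open Real

section Gaussian

variable {V : Type*} [NormedAddCommGroup V] [InnerProductSpace ℝ V] [FiniteDimensional ℝ V]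
  [MeasurableSpace V] [BorelSpace V]

theorem integrable_exp_neg_mul_sq_norm {b : ℝ} (hb : 0 < b) :
    Integrable (fun v : V => exp (-b * ‖v‖ ^ 2)) := by
  refine Integrable.of_integral_ne_zero ?_
  rw [GaussianFourier.integral_rexp_neg_mul_sq_norm hb]
  positivity

theorem integrable_exp_mul_norm_sub_mul_sq_norm {b : ℝ} (hb : 0 < b) (c : ℝ) :
    Integrable (fun v : V => exp (c * ‖v‖ - b * ‖v‖ ^ 2)) := by
  refine ((integrable_exp_neg_mul_sq_norm (half_pos hb)).const_mul (exp (c ^ 2 / (2 * b)))).mono'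
    (by fun_prop) (ae_of_all _ fun v => ?_)
  rw [norm_of_nonneg (exp_pos _).le, ← exp_add, exp_le_exp]
  have complete_square : c * ‖v‖ - b * ‖v‖ ^ 2
      = c ^ 2 / (2 * b) + -(b / 2) * ‖v‖ ^ 2 - (c - b * ‖v‖) ^ 2 / (2 * b) := by
    field_simp
    ring
  rw [complete_square]
  linarith [div_nonneg (sq_nonneg (c - b * ‖v‖)) (by positivity : (0 : ℝ) ≤ 2 * b)]

end Gaussian

theorem two_mul_norm_le_norm_sub_add_norm_add {E : Type*} [NormedAddCommGroup E]
    [NormedSpace ℝ E] (v w : E) : 2 * ‖v‖ ≤ ‖v - w‖ + ‖v + w‖ := by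
  have h := norm_add_le (v - w) (v + w)
  rwa [show v - w + (v + w) = (2 : ℝ) • v by module, norm_smul, Real.norm_two] at h

section Maxwellian

variable {β : ℝ}

theorem Mβ_pos (hβ : 0 < β) (v : E3) : 0 < Mβ β v := by
  unfold Mβ
  positivity

theorem Mβ_neg (v : E3) : Mβ β (-v) = Mβ β v := by
  simp [Mβ]

@[fun_prop]
theorem continuous_Mβ : Continuous (Mβ β) := by
  unfold Mβ
  fun_prop

theorem integral_Mβ (hβ : 0 < β) : ∫ v : E3, Mβ β v = 1 := by
  simp only [Mβ, integral_const_mul, GaussianFourier.integral_rexp_neg_mul_sq_norm (half_pos hβ),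
    finrank_euclideanSpace, Fintype.card_fin, Nat.cast_ofNat]
  rw [← mul_rpow (by positivity) (by positivity)]
  field_simp
  simp

theorem integrable_exp_mul_norm_mul_Mβ (hβ : 0 < β) (c : ℝ) :
    Integrable (fun v : E3 => exp (c * ‖v‖) * Mβ β v) := by
  convert (integrable_exp_mul_norm_sub_mul_sq_norm (half_pos hβ) c).const_mul
    ((β / (2 * π)) ^ ((3 : ℝ) / 2)) using 2 with v
  simp only [Mβ, sub_eq_add_neg, exp_add]
  ring_nf

theorem integrable_Mβ (hβ : 0 < β) : Integrable (Mβ β) := by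
  simpa using integrable_exp_mul_norm_mul_Mβ hβ 0

theorem integrable_Mβ_mul_norm_sub (hβ : 0 < β) (v : E3) :
    Integrable (fun w : E3 => Mβ β w * ‖v - w‖) := by
  refine ((integrable_exp_mul_norm_mul_Mβ hβ 1).const_mul (exp ‖v‖)).mono'
    (by fun_prop) (ae_of_all _ fun w => ?_)
  have h : ‖v - w‖ ≤ exp ‖v‖ * exp (1 * ‖w‖) := by
    rw [one_mul, ← exp_add]
    linarith [norm_sub_le v w, add_one_le_exp (‖v‖ + ‖w‖)]
  rw [norm_mul, norm_norm, norm_of_nonneg (Mβ_pos hβ w).le]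
  nlinarith [Mβ_pos hβ w]

@[fun_prop]
theorem measurable_lam : Measurable (lam β) := by
  have h : Continuous fun p : E3 × E3 => Mβ β p.2 * ‖p.1 - p.2‖ := by fun_prop
  exact (h.stronglyMeasurable.integral_prod_right' (ν := volume)).measurable.const_mul π

theorem lam_pos (hβ : 0 < β) (v : E3) : 0 < lam β v := by
  obtain ⟨e, he⟩ := exists_ne (0 : E3)
  refine mul_pos pi_pos (integral_pos_of_integrable_nonneg_nonzero (x := v - e) (by fun_prop)
    (integrable_Mβ_mul_norm_sub hβ v) (fun w => mul_nonneg (Mβ_pos hβ w).le (norm_nonneg _)) ?_)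
  simpa using (mul_pos (Mβ_pos hβ (v - e)) (norm_pos_iff.2 he)).ne'

theorem pi_mul_norm_le_lam (hβ : 0 < β) (v : E3) : π * ‖v‖ ≤ lam β v := by
  have hint := integrable_Mβ_mul_norm_sub hβ v
  have hint' : Integrable (fun w : E3 => Mβ β w * ‖v + w‖) := by
    simpa [Mβ_neg] using hint.comp_neg
  have hneg : ∫ w : E3, Mβ β w * ‖v + w‖ = ∫ w : E3, Mβ β w * ‖v - w‖ := by
    simpa [Mβ_neg] using integral_neg_eq_self (fun w : E3 => Mβ β w * ‖v - w‖) volume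
  have hsum : 2 * ‖v‖ ≤ (∫ w : E3, Mβ β w * ‖v - w‖) + ∫ w : E3, Mβ β w * ‖v + w‖ :=
    calc 2 * ‖v‖ = ∫ w : E3, Mβ β w * (2 * ‖v‖) := by
          rw [integral_mul_const, integral_Mβ hβ, one_mul]
      _ ≤ ∫ w : E3, (Mβ β w * ‖v - w‖ + Mβ β w * ‖v + w‖) := by
          refine integral_mono ((integrable_Mβ hβ).mul_const _) (hint.add hint') fun w => ?_
          rw [← mul_add]
          exact mul_le_mul_of_nonneg_left (two_mul_norm_le_norm_sub_add_norm_add v w)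
            (Mβ_pos hβ w).le
      _ = _ := integral_add hint hint'
  rw [hneg] at hsum
  exact mul_le_mul_of_nonneg_left (by linarith) pi_pos.le

theorem sq_norm_div_lam_le (hβ : 0 < β) (v : E3) : ‖v‖ ^ 2 / lam β v ≤ ‖v‖ / π := by
  rw [div_le_div_iff₀ (lam_pos hβ v) pi_pos]
  nlinarith [pi_mul_norm_le_lam hβ v, norm_nonneg v]

end Maxwellian

/-- `λ(v) > 0` for every `v`, and `‖v‖²/λ(v)` has all exponential moments with respect to
the measure `M_β(v) dv`: for every `a > 0`, `∫ exp(a‖v‖²/λ(v)) M_β(v) dv < ∞`. -/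
theorem exp_moments_of_energy_over_lam (β : ℝ) (hβ : 0 < β) :
    (∀ v : E3, 0 < lam β v) ∧
    ∀ a : ℝ, 0 < a →
      Integrable (fun v : E3 => Real.exp (a * ‖v‖ ^ 2 / lam β v) * Mβ β v) := by
  refine ⟨lam_pos hβ, fun a ha => ?_⟩
  refine (integrable_exp_mul_norm_mul_Mβ hβ (a / π)).mono'
    (by fun_prop : Measurable _).aestronglyMeasurable (ae_of_all _ fun v => ?_)
  rw [norm_of_nonneg (mul_nonneg (exp_pos _).le (Mβ_pos hβ v).le)]
  refine mul_le_mul_of_nonneg_right (exp_le_exp.2 ?_) (Mβ_pos hβ v).le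
  calc a * ‖v‖ ^ 2 / lam β v = a * (‖v‖ ^ 2 / lam β v) := mul_div_assoc _ _ _
    _ ≤ a * (‖v‖ / π) := mul_le_mul_of_nonneg_left (sq_norm_div_lam_le hβ v) ha.le
    _ = a / π * ‖v‖ := by ring
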